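/- In the ACA algorithm, after the $k$-th step the residual matrix $R_k = A - S_k$ (with $S_k = \sum_{l=1}^k a_l b_l^H$ built by cross approximation) has zero $i_l$-th row and zero $j_l$-th column for each of the previously chosen pivot indices $l = 1, \ldots, k$, provided all pivot entries $(b_l)_{j_l}$ are nonzero. -/
import Mathlib


open Matrix

/-- In the ACA algorithm the residual `R k = A - S k` after `k` cross-approximation
steps (each step subtracting the rank-one cross
`R l · eⱼₗ ⊗ eᵢₗ · R l / R l iₗ jₗ` built from the pivot row `iₗ` and column `jₗ`)
has zero `iₗ`-th row and zero `jₗ`-th column for every previously chosen pivot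
`l < k`, provided all pivot entries are nonzero. -/
theorem aca_residual_interpolates (m n : ℕ) (A : Matrix (Fin m) (Fin n) ℂ)
    (i : ℕ → Fin m) (j : ℕ → Fin n)
    (R : ℕ → Matrix (Fin m) (Fin n) ℂ)
    (hR0 : R 0 = A)
    (hstep : ∀ l : ℕ, R (l + 1) =
      R l - Matrix.of (fun p q => R l p (j l) * R l (i l) q / R l (i l) (j l)))
    (k : ℕ) (hpivot : ∀ l < k, R l (i l) (j l) ≠ 0) :
    ∀ l < k, (∀ q : Fin n, R k (i l) q = 0) ∧ (∀ p : Fin m, R k p (j l) = 0) := by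
  induction k with
  | zero => intro l hl; omega
  | succ k ih =>
    have hpiv' : ∀ l < k, R l (i l) (j l) ≠ 0 := fun l hl => hpivot l (by omega)
    have hentry : ∀ p q, R (k + 1) p q =
        R k p q - R k p (j k) * R k (i k) q / R k (i k) (j k) := by
      intro p q; rw [hstep k]; simp [Matrix.sub_apply]
    intro l hl
    rcases Nat.lt_succ_iff_lt_or_eq.mp hl with hlt | rfl
    · obtain ⟨hrow, hcol⟩ := ih hpiv' l hlt
      constructor
      · intro q; rw [hentry, hrow, hrow]; ring
      · intro p; rw [hentry, hcol, hcol]; ring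
    · have hp := hpivot l (Nat.lt_succ_self _)
      constructor
      · intro q; rw [hentry, mul_comm, mul_div_assoc, div_self hp, mul_one, sub_self]
      · intro p; rw [hentry, mul_div_assoc, div_self hp, mul_one, sub_self]
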